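/- Let R = {p ∈ [0,1]^n : q̆_V(p) > 0} and let S be the Shearer region (an open set, characterized by q̆_T(p) > 0 for all T). If f : [0,1] → R is continuous with f(0) ∈ S, then f(t) ∈ S for all t ∈ [0,1]. -/

import Mathlib

/-!
Splitting the independent subsets of `T ∪ {v}` by whether they contain `v` gives the recursion
`q̆_{T ∪ {v}} = q̆_T - p_v q̆_{T \ N(v)}`, so for `p ≥ 0` with all `q̆_T ≥ 0` the map `T ↦ q̆_T` is
antitone and `q̆_T ≥ q̆_V`. Hence a point of `R` in the closure of the (open) Shearer region `S`
already lies in `S`: there `q̆_T ≥ 0` for all `T` and so `q̆_T ≥ q̆_V > 0`. The path `f([0,1])` is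
connected, meets `S` at `f(0)` and every limit point of `S` on it lies in `S`, so it stays in `S`.
-/

open Finset

/-- alternating-sign independence polynomial over ℝ -/
def qbarR {V : Type*} [DecidableEq V] (G : SimpleGraph V) [DecidableRel G.Adj]
    (p : V → ℝ) (S : Finset V) : ℝ :=
  ∑ I ∈ S.powerset.filter (fun I => ∀ u ∈ I, ∀ v ∈ I, ¬ G.Adj u v),
    (-1 : ℝ) ^ I.card * ∏ v ∈ I, p v

def shearerRegion {V : Type*} [Fintype V] [DecidableEq V] (G : SimpleGraph V)
    [DecidableRel G.Adj] : Set (V → ℝ) :=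
  {p | ∀ T : Finset V, 0 < qbarR G p T}

section

variable {V : Type*} [DecidableEq V] {G : SimpleGraph V}

lemma indep_insert_iff {I : Finset V} {v : V} (hv : ∀ u ∈ I, ¬ G.Adj u v) :
    (∀ u ∈ insert v I, ∀ w ∈ insert v I, ¬ G.Adj u w) ↔ ∀ u ∈ I, ∀ w ∈ I, ¬ G.Adj u w := by
  refine ⟨fun h u hu w hw => h u (mem_insert_of_mem hu) w (mem_insert_of_mem hw), fun h => ?_⟩
  simp only [mem_insert, forall_eq_or_imp]
  exact ⟨⟨G.irrefl, fun w hw hvw => hv w hw hvw.symm⟩, fun u hu => ⟨hv u hu, h u hu⟩⟩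

variable [DecidableRel G.Adj]

lemma qbarR_eq_sum_powerset (p : V → ℝ) (S : Finset V) :
    qbarR G p S = ∑ I ∈ S.powerset,
      if ∀ u ∈ I, ∀ v ∈ I, ¬ G.Adj u v then (-1 : ℝ) ^ I.card * ∏ v ∈ I, p v else 0 :=
  sum_filter _ _

lemma qbarR_insert (p : V → ℝ) {T : Finset V} {v : V} (hv : v ∉ T) :
    qbarR G p (insert v T) =
      qbarR G p T - p v * qbarR G p (T.filter fun u => ¬ G.Adj u v) := by
  set F := T.filter fun u => ¬ G.Adj u v
  have hvanish : ∀ J ∈ T.powerset, J ∉ F.powerset →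
      (if ∀ u ∈ insert v J, ∀ w ∈ insert v J, ¬ G.Adj u w then
        (-1 : ℝ) ^ (insert v J).card * ∏ w ∈ insert v J, p w else 0) = 0 := by
    intro J hJT hJF
    obtain ⟨u, huJ, hu⟩ := not_subset.1 (mt mem_powerset.2 hJF)
    have hadj : G.Adj u v := by
      by_contra h
      exact hu (mem_filter.2 ⟨mem_powerset.1 hJT huJ, h⟩)
    exact if_neg fun h => h u (mem_insert_of_mem huJ) v (mem_insert_self v J) hadj
  rw [qbarR_eq_sum_powerset p (insert v T), sum_powerset_insert hv,
    ← sum_subset (powerset_mono.2 (filter_subset _ T)) hvanish, ← qbarR_eq_sum_powerset,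
    qbarR_eq_sum_powerset p F, mul_sum, sub_eq_add_neg, ← sum_neg_distrib]
  congr 1
  refine sum_congr rfl fun J hJ => ?_
  have hJF : J ⊆ F := mem_powerset.1 hJ
  have hvJ : v ∉ J := fun h => hv (mem_filter.1 (hJF h)).1
  rw [card_insert_of_notMem hvJ, prod_insert hvJ]
  simp only [indep_insert_iff fun u hu => (mem_filter.1 (hJF hu)).2]
  split_ifs <;> ring

lemma qbarR_insert_le {p : V → ℝ} {T : Finset V} {v : V} (hp : 0 ≤ p v)
    (hq : 0 ≤ qbarR G p (T.filter fun u => ¬ G.Adj u v)) :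
    qbarR G p (insert v T) ≤ qbarR G p T := by
  by_cases hv : v ∈ T
  · rw [insert_eq_of_mem hv]
  · rw [qbarR_insert p hv]
    linarith [mul_nonneg hp hq]

lemma qbarR_le_of_subset {p : V → ℝ} (hp : ∀ v, 0 ≤ p v) (hq : ∀ T, 0 ≤ qbarR G p T)
    {A B : Finset V} (hAB : A ⊆ B) : qbarR G p B ≤ qbarR G p A := by
  rw [← union_sdiff_of_subset hAB]
  induction B \ A using Finset.induction_on with
  | empty => rw [union_empty]
  | insert v s _ ih => exact (union_insert v A s ▸ qbarR_insert_le (hp v) (hq _)).trans ih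

lemma continuous_qbarR (T : Finset V) : Continuous fun p : V → ℝ => qbarR G p T := by
  unfold qbarR
  fun_prop

variable [Fintype V]

lemma isOpen_shearerRegion : IsOpen (shearerRegion G) := by
  simp only [shearerRegion, Set.ofPred_forall]
  exact isOpen_iInter_of_finite fun T => isOpen_lt continuous_const (continuous_qbarR T)

lemma qbarR_nonneg_of_mem_closure {p : V → ℝ} (hp : p ∈ closure (shearerRegion G))
    (T : Finset V) : 0 ≤ qbarR G p T :=
  closure_lt_subset_le continuous_const (continuous_qbarR T)
    (closure_mono (fun q (hq : q ∈ shearerRegion G) => hq T) hp)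

lemma mem_shearerRegion_of_nonneg {p : V → ℝ} (hp : ∀ v, 0 ≤ p v)
    (huniv : 0 < qbarR G p univ) (hq : ∀ T, 0 ≤ qbarR G p T) : p ∈ shearerRegion G :=
  fun T => huniv.trans_le (qbarR_le_of_subset hp hq (subset_univ T))

end

/-- let `R = {p ∈ [0,1]^V : q̆_V(p) > 0}` and let `S` be the Shearer
region (`q̆_T(p) > 0` for all `T`).  If `f : [0,1] → R` is continuous with
`f(0) ∈ S`, then `f(t) ∈ S` for all `t ∈ [0,1]`. -/
theorem stmt16 {V : Type*} [Fintype V] [DecidableEq V] (G : SimpleGraph V)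
    [DecidableRel G.Adj] (f : ℝ → V → ℝ)
    (hcont : ContinuousOn f (Set.Icc (0 : ℝ) 1))
    (hrange : ∀ t ∈ Set.Icc (0 : ℝ) 1,
      (∀ v, f t v ∈ Set.Icc (0 : ℝ) 1) ∧ 0 < qbarR G (f t) Finset.univ)
    (h0 : ∀ T : Finset V, 0 < qbarR G (f 0) T) :
    ∀ t ∈ Set.Icc (0 : ℝ) 1, ∀ T : Finset V, 0 < qbarR G (f t) T := by
  have h0mem : (0 : ℝ) ∈ Set.Icc (0 : ℝ) 1 := Set.left_mem_Icc.2 zero_le_one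
  have hpath : f '' Set.Icc 0 1 ⊆ shearerRegion G := by
    refine (isPreconnected_Icc.image f hcont).subset_of_closure_inter_subset
      isOpen_shearerRegion ⟨f 0, Set.mem_image_of_mem f h0mem, h0⟩ ?_
    rintro _ ⟨hcl, t, ht, rfl⟩
    exact mem_shearerRegion_of_nonneg (fun v => ((hrange t ht).1 v).1) (hrange t ht).2
      (qbarR_nonneg_of_mem_closure hcl)
  exact fun t ht => hpath (Set.mem_image_of_mem f ht)
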